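/- arXiv:2206.05527 — 3 statements merged into one kernel-verified Lean document; each statement's English description precedes it below -/
import Mathlib

section
/- Let 1 ≤ m < n be integers, s := n/m − 1, and let 0 < γ0 ≤ 1 ≤ γ1 be real constants. Let A ⊂ ℂ^n be a finite set with at least two elements and weight function ν : A → (0,∞) satisfying ν(a) ≥ γ0 for every a ∈ A and Σ_{a∈A} ν(a) ≤ γ1. Then for every δ with 0 < δ ≤ γ1^{−1/(2s)}·σ_A and every z ∈ A_δ \ A, one has φ(z,A) − δ^{−2s} ≤ ψ(z,A) ≤ φ(z,A). -/
/-!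
Every term `-ν a * ‖z - a‖ ^ (-2s)` is nonpositive, so the sum `ψ` lies below each term and hence
below `φ`. For the lower bound, `z` lies in the ball around some `b ∈ A` of radius
`ν b ^ (1/2s) * δ ≤ γ1 ^ (1/2s) * δ ≤ σ_A`, so by the triangle inequality every other point of `A`
is at distance at least `σ_A` from `z`. The terms with `a ≠ b` therefore add up to at most
`(∑ ν) * σ_A ^ (-2s) ≤ γ1 * σ_A ^ (-2s) ≤ δ ^ (-2s)`, while the term at `b` is at least `φ`.
-/

open Finset Metric Real

namespace Finset

variable {ι M : Type*} [AddCommGroup M] [LinearOrder M] [IsOrderedAddMonoid M]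

theorem sum_le_inf'_of_nonpos (s : Finset ι) (hs : s.Nonempty) (f : ι → M)
    (hf : ∀ i ∈ s, f i ≤ 0) : ∑ i ∈ s, f i ≤ s.inf' hs f :=
  le_inf' hs f fun i hi => by
    classical
    rw [← add_sum_erase s f hi]
    exact add_le_of_nonpos_right (sum_nonpos fun j hj => hf j (mem_of_mem_erase hj))

theorem inf'_sub_le_sum_of_neg_le_sum_erase [DecidableEq ι] (s : Finset ι) (hs : s.Nonempty)
    (f : ι → M) {b : ι} (hb : b ∈ s) {ε : M} (hε : -ε ≤ ∑ i ∈ s.erase b, f i) :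
    s.inf' hs f - ε ≤ ∑ i ∈ s, f i := by
  rw [← add_sum_erase s f hb, sub_eq_add_neg]
  exact add_le_add (inf'_le f hb) hε

end Finset

section RpowBounds

variable {p c δ σ : ℝ}

theorem rpow_inv_mul_le_of_le_rpow_neg_inv_mul {ν : ℝ} (hp : 0 < p) (hc : 0 < c)
    (hν : 0 ≤ ν) (hνc : ν ≤ c) (hδ : 0 ≤ δ) (hδσ : δ ≤ c ^ (-(1 / p)) * σ) :
    ν ^ (1 / p) * δ ≤ σ :=
  calc ν ^ (1 / p) * δ ≤ c ^ (1 / p) * (c ^ (-(1 / p)) * σ) := by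
        gcongr
    _ = σ := by rw [← mul_assoc, ← rpow_add hc, add_neg_cancel, rpow_zero, one_mul]

theorem mul_rpow_neg_le_of_le_rpow_neg_inv_mul (hp : 0 < p) (hc : 0 < c) (hδ : 0 < δ)
    (hδσ : δ ≤ c ^ (-(1 / p)) * σ) : c * σ ^ (-p) ≤ δ ^ (-p) := by
  have hσ : 0 < σ := pos_of_mul_pos_right (hδ.trans_le hδσ) (rpow_pos_of_pos hc _).le
  calc c * σ ^ (-p) = (c ^ (-(1 / p)) * σ) ^ (-p) := by
        rw [mul_rpow (rpow_pos_of_pos hc _).le hσ.le, ← rpow_mul hc.le, neg_mul_neg,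
          one_div_mul_cancel hp.ne', rpow_one]
    _ ≤ δ ^ (-p) := rpow_le_rpow_of_nonpos hδ hδσ (neg_nonpos.mpr hp.le)

end RpowBounds

theorem sum_erase_mul_norm_sub_rpow_neg_le {E : Type*} [SeminormedAddCommGroup E]
    [DecidableEq E] (A : Finset E) (ν : E → ℝ) (hν : ∀ a ∈ A, 0 ≤ ν a) {σ p : ℝ} (hp : 0 ≤ p)
    (hsep : ∀ a ∈ A, ∀ b ∈ A, a ≠ b → 2 * σ ≤ ‖a - b‖) {b z : E} (hb : b ∈ A)
    (hzb : ‖z - b‖ < σ) :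
    ∑ a ∈ A.erase b, ν a * ‖z - a‖ ^ (-p) ≤ (∑ a ∈ A, ν a) * σ ^ (-p) := by
  have hσ : 0 < σ := (norm_nonneg _).trans_lt hzb
  have hfar : ∀ a ∈ A.erase b, σ ≤ ‖z - a‖ := fun a ha => by
    have hab := hsep a (mem_of_mem_erase ha) b hb (ne_of_mem_erase ha)
    have htri := norm_sub_le_norm_sub_add_norm_sub a z b
    rw [norm_sub_rev a z] at htri
    linarith
  calc ∑ a ∈ A.erase b, ν a * ‖z - a‖ ^ (-p)
      ≤ ∑ a ∈ A.erase b, ν a * σ ^ (-p) := sum_le_sum fun a ha =>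
        mul_le_mul_of_nonneg_left (rpow_le_rpow_of_nonpos hσ (hfar a ha) (neg_nonpos.mpr hp))
          (hν a (mem_of_mem_erase ha))
    _ = (∑ a ∈ A.erase b, ν a) * σ ^ (-p) := (sum_mul _ _ _).symm
    _ ≤ (∑ a ∈ A, ν a) * σ ^ (-p) := mul_le_mul_of_nonneg_right
        (sum_le_sum_of_subset_of_nonneg (erase_subset b A) fun a ha _ => hν a ha)
        (rpow_nonneg hσ.le _)

theorem stmt_2_general (m n : ℕ) (hm : 1 ≤ m) (hmn : m < n)
    (s : ℝ) (hs : s = (n : ℝ) / (m : ℝ) - 1)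
    (γ1 : ℝ) (hγ1 : 1 ≤ γ1)
    (A : Finset (EuclideanSpace ℂ (Fin n))) (hA : A.Nonempty)
    (ν : EuclideanSpace ℂ (Fin n) → ℝ)
    (hνpos : ∀ a ∈ A, 0 < ν a)
    (hνsum : ∑ a ∈ A, ν a ≤ γ1)
    (σA : ℝ)
    (hσ1 : ∀ a ∈ A, ∀ b ∈ A, a ≠ b → 2 * σA ≤ ‖a - b‖)
    (δ : ℝ) (hδ : 0 < δ) (hδσ : δ ≤ γ1 ^ (-(1 / (2 * s))) * σA)
    (z : EuclideanSpace ℂ (Fin n))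
    (hzA : z ∈ ⋃ a ∈ A, Metric.ball a (ν a ^ (1 / (2 * s)) * δ)) :
    A.inf' hA (fun a => -(ν a * ‖z - a‖ ^ (-(2 * s)))) - δ ^ (-(2 * s))
      ≤ ∑ a ∈ A, -(ν a * ‖z - a‖ ^ (-(2 * s)))
    ∧ ∑ a ∈ A, -(ν a * ‖z - a‖ ^ (-(2 * s)))
      ≤ A.inf' hA (fun a => -(ν a * ‖z - a‖ ^ (-(2 * s)))) := by
  classical
  have hp : 0 < 2 * s := by
    have : (1 : ℝ) < n / m := by
      rw [one_lt_div (by exact_mod_cast hm)]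
      exact_mod_cast hmn
    linarith
  have hγ1pos : 0 < γ1 := one_pos.trans_le hγ1
  have hν : ∀ a ∈ A, 0 ≤ ν a := fun a ha => (hνpos a ha).le
  obtain ⟨b, hb, hzb⟩ : ∃ b ∈ A, ‖z - b‖ < ν b ^ (1 / (2 * s)) * δ := by
    simpa only [Set.mem_iUnion, mem_ball, dist_eq_norm, exists_prop] using hzA
  have hzbσ : ‖z - b‖ < σA := hzb.trans_le <| rpow_inv_mul_le_of_le_rpow_neg_inv_mul hp hγ1pos
    (hν b hb) ((single_le_sum hν hb).trans hνsum) hδ.le hδσ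
  refine ⟨inf'_sub_le_sum_of_neg_le_sum_erase A hA _ hb ?_,
    sum_le_inf'_of_nonpos A hA _ fun a ha => neg_nonpos.mpr
      (mul_nonneg (hν a ha) (rpow_nonneg (norm_nonneg _) _))⟩
  rw [sum_neg_distrib, neg_le_neg_iff]
  calc ∑ a ∈ A.erase b, ν a * ‖z - a‖ ^ (-(2 * s))
      ≤ (∑ a ∈ A, ν a) * σA ^ (-(2 * s)) :=
        sum_erase_mul_norm_sub_rpow_neg_le A ν hν hp.le hσ1 hb hzbσ
    _ ≤ γ1 * σA ^ (-(2 * s)) :=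
        mul_le_mul_of_nonneg_right hνsum (rpow_nonneg ((norm_nonneg _).trans hzbσ.le) _)
    _ ≤ δ ^ (-(2 * s)) := mul_rpow_neg_le_of_le_rpow_neg_inv_mul hp hγ1pos hδ hδσ

/-- case 1 ≤ m < n. For δ ≤ γ1^{−1/(2s)}·σ_A and z ∈ A_δ \ A:
φ(z,A) − δ^{−2s} ≤ ψ(z,A) ≤ φ(z,A). Here 2σ_A is the minimal distance between
distinct points of A, characterized by hσ1 and hσ2. -/
theorem stmt_2 (m n : ℕ) (hm : 1 ≤ m) (hmn : m < n)
    (s : ℝ) (hs : s = (n : ℝ) / (m : ℝ) - 1)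
    (γ0 γ1 : ℝ) (hγ0 : 0 < γ0) (hγ0' : γ0 ≤ 1) (hγ1 : 1 ≤ γ1)
    (A : Finset (EuclideanSpace ℂ (Fin n))) (hA : A.Nonempty) (hcard : 1 < A.card)
    (ν : EuclideanSpace ℂ (Fin n) → ℝ)
    (hνpos : ∀ a ∈ A, 0 < ν a)
    (hνlb : ∀ a ∈ A, γ0 ≤ ν a)
    (hνsum : ∑ a ∈ A, ν a ≤ γ1)
    (σA : ℝ)
    (hσ1 : ∀ a ∈ A, ∀ b ∈ A, a ≠ b → 2 * σA ≤ ‖a - b‖)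
    (hσ2 : ∃ a ∈ A, ∃ b ∈ A, a ≠ b ∧ ‖a - b‖ = 2 * σA)
    (δ : ℝ) (hδ : 0 < δ) (hδσ : δ ≤ γ1 ^ (-(1 / (2 * s))) * σA)
    (z : EuclideanSpace ℂ (Fin n))
    (hzA : z ∈ ⋃ a ∈ A, Metric.ball a (ν a ^ (1 / (2 * s)) * δ))
    (hznA : z ∉ (A : Set (EuclideanSpace ℂ (Fin n)))) :
    A.inf' hA (fun a => -(ν a * ‖z - a‖ ^ (-(2 * s)))) - δ ^ (-(2 * s))
      ≤ ∑ a ∈ A, -(ν a * ‖z - a‖ ^ (-(2 * s)))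
    ∧ ∑ a ∈ A, -(ν a * ‖z - a‖ ^ (-(2 * s)))
      ≤ A.inf' hA (fun a => -(ν a * ‖z - a‖ ^ (-(2 * s)))) :=
  stmt_2_general m n hm hmn s hs γ1 hγ1 A hA ν hνpos hνsum σA hσ1 δ hδ hδσ z hzA
end

section
/- Let 1 ≤ m < n be integers, s := n/m − 1, and let 0 < γ0 ≤ 1 ≤ γ1 be real constants. Let A ⊂ ℂ^n be a finite set with at least two elements and weight function ν : A → (0,∞) satisfying ν(a) ≥ γ0 for every a ∈ A and Σ_{a∈A} ν(a) ≤ γ1. Then for every z ∈ ℂ^n \ A, one has ψ(z,A) ≤ φ(z,A) ≤ ψ(z,A) + (γ1²/γ0)·σ_A^{−2s}. -/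
/-!
Every term `-ν(a)|z-a|^{-2s}` is nonpositive, so `ψ` lies below each term and hence below `φ`.
Conversely, let `a*` be a point of `A` nearest to `z`. For `a ≠ a*` the triangle inequality gives
`2σ_A ≤ |a - a*| ≤ |z - a| + |z - a*| ≤ 2|z - a|`, so dropping the `a*`-term from `ψ` changes it by at
most `(Σ ν) σ_A^{-2s} ≤ γ1 σ_A^{-2s}`, and `γ1 ≤ γ1²/γ0` since `γ0 ≤ γ1`.
-/

open Finset Real

theorem Finset.sum_le_inf'_of_nonpos_s4 {ι M : Type*} [AddCommMonoid M] [SemilatticeInf M]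
    [AddLeftMono M] {s : Finset ι} (hs : s.Nonempty) {f : ι → M}
    (hf : ∀ i ∈ s, f i ≤ 0) : ∑ i ∈ s, f i ≤ s.inf' hs f :=
  le_inf' hs f fun i hi => by
    simpa using sum_le_sum_of_subset_of_nonpos' (singleton_subset_iff.2 hi) fun j hj _ => hf j hj

theorem le_norm_sub_of_nearest {E : Type*} [SeminormedAddCommGroup E] {z a b : E} {σ : ℝ}
    (hsep : 2 * σ ≤ ‖a - b‖) (hnear : ‖z - b‖ ≤ ‖z - a‖) : σ ≤ ‖z - a‖ := by
  have := norm_sub_le_norm_sub_add_norm_sub a z b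
  rw [norm_sub_rev a z] at this
  linarith

section RieszPotential

variable {E : Type*} [SeminormedAddCommGroup E] {A : Finset E} {w : E → ℝ} {z : E} {σ p : ℝ}

theorem sum_erase_nearest_le [DecidableEq E] {b : E} (hw : ∀ a ∈ A, 0 ≤ w a) (hp : p ≤ 0)
    (hσ : 0 < σ) (hnear : ∀ a ∈ A, ‖z - b‖ ≤ ‖z - a‖)
    (hsep : ∀ a ∈ A, a ≠ b → 2 * σ ≤ ‖a - b‖) :
    ∑ a ∈ A.erase b, w a * ‖z - a‖ ^ p ≤ (∑ a ∈ A, w a) * σ ^ p :=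
  calc ∑ a ∈ A.erase b, w a * ‖z - a‖ ^ p
      ≤ ∑ a ∈ A.erase b, w a * σ ^ p := sum_le_sum fun a ha => by
        obtain ⟨hab, haA⟩ := mem_erase.1 ha
        exact mul_le_mul_of_nonneg_left
          (rpow_le_rpow_of_nonpos hσ (le_norm_sub_of_nearest (hsep a haA hab) (hnear a haA)) hp)
          (hw a haA)
    _ = (∑ a ∈ A.erase b, w a) * σ ^ p := (sum_mul _ _ _).symm
    _ ≤ (∑ a ∈ A, w a) * σ ^ p :=
      mul_le_mul_of_nonneg_right
        (sum_le_sum_of_subset_of_nonneg (erase_subset b A) fun a ha _ => hw a ha)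
        (rpow_nonneg hσ.le p)

theorem inf'_neg_rpow_le_sum_add (hA : A.Nonempty) (hw : ∀ a ∈ A, 0 ≤ w a) (hp : p ≤ 0)
    (hσ : 0 < σ) (hsep : ∀ a ∈ A, ∀ b ∈ A, a ≠ b → 2 * σ ≤ ‖a - b‖) :
    A.inf' hA (fun a => -(w a * ‖z - a‖ ^ p))
      ≤ ∑ a ∈ A, -(w a * ‖z - a‖ ^ p) + (∑ a ∈ A, w a) * σ ^ p := by
  classical
  obtain ⟨b, hb, hnear⟩ := A.exists_min_image (fun a => ‖z - a‖) hA
  have htail := sum_erase_nearest_le hw hp hσ hnear fun a ha hab => hsep a ha b hb hab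
  rw [← add_sum_erase A _ hb, sum_neg_distrib]
  linarith [inf'_le (fun a => -(w a * ‖z - a‖ ^ p)) hb]

end RieszPotential

theorem stmt_4_general (m n : ℕ) (hm : 1 ≤ m) (hmn : m < n)
    (s : ℝ) (hs : s = (n : ℝ) / (m : ℝ) - 1)
    (γ0 γ1 : ℝ) (hγ0 : 0 < γ0) (hγ0' : γ0 ≤ 1) (hγ1 : 1 ≤ γ1)
    (A : Finset (EuclideanSpace ℂ (Fin n))) (hA : A.Nonempty)
    (ν : EuclideanSpace ℂ (Fin n) → ℝ)
    (hνpos : ∀ a ∈ A, 0 < ν a)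
    (hνsum : ∑ a ∈ A, ν a ≤ γ1)
    (σA : ℝ)
    (hσ1 : ∀ a ∈ A, ∀ b ∈ A, a ≠ b → 2 * σA ≤ ‖a - b‖)
    (hσ2 : ∃ a ∈ A, ∃ b ∈ A, a ≠ b ∧ ‖a - b‖ = 2 * σA)
    (z : EuclideanSpace ℂ (Fin n)) :
    ∑ a ∈ A, -(ν a * ‖z - a‖ ^ (-(2 * s)))
      ≤ A.inf' hA (fun a => -(ν a * ‖z - a‖ ^ (-(2 * s))))
    ∧ A.inf' hA (fun a => -(ν a * ‖z - a‖ ^ (-(2 * s))))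
      ≤ ∑ a ∈ A, -(ν a * ‖z - a‖ ^ (-(2 * s))) + γ1 ^ 2 / γ0 * σA ^ (-(2 * s)) := by
  have hs0 : 0 < s := by
    rw [hs, sub_pos, one_lt_div (Nat.cast_pos.2 hm)]
    exact_mod_cast hmn
  have hσ : 0 < σA := by
    obtain ⟨a, -, b, -, hab, hdist⟩ := hσ2
    linarith [norm_pos_iff.2 (sub_ne_zero.2 hab)]
  have hν : ∀ a ∈ A, 0 ≤ ν a := fun a ha => (hνpos a ha).le
  refine ⟨sum_le_inf'_of_nonpos_s4 hA fun a ha =>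
    neg_nonpos.2 (mul_nonneg (hν a ha) (rpow_nonneg (norm_nonneg _) _)), ?_⟩
  have hγ : γ1 ≤ γ1 ^ 2 / γ0 := by
    rw [le_div_iff₀ hγ0]
    nlinarith
  calc _ ≤ _ + (∑ a ∈ A, ν a) * σA ^ (-(2 * s)) :=
        inf'_neg_rpow_le_sum_add hA hν (by linarith) hσ hσ1
    _ ≤ _ := by gcongr; exact hνsum.trans hγ

/-- case 1 ≤ m < n. For every z ∉ A:
ψ(z,A) ≤ φ(z,A) ≤ ψ(z,A) + (γ1²/γ0)·σ_A^{−2s}. -/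
theorem stmt_4 (m n : ℕ) (hm : 1 ≤ m) (hmn : m < n)
    (s : ℝ) (hs : s = (n : ℝ) / (m : ℝ) - 1)
    (γ0 γ1 : ℝ) (hγ0 : 0 < γ0) (hγ0' : γ0 ≤ 1) (hγ1 : 1 ≤ γ1)
    (A : Finset (EuclideanSpace ℂ (Fin n))) (hA : A.Nonempty) (hcard : 1 < A.card)
    (ν : EuclideanSpace ℂ (Fin n) → ℝ)
    (hνpos : ∀ a ∈ A, 0 < ν a)
    (hνlb : ∀ a ∈ A, γ0 ≤ ν a)
    (hνsum : ∑ a ∈ A, ν a ≤ γ1)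
    (σA : ℝ)
    (hσ1 : ∀ a ∈ A, ∀ b ∈ A, a ≠ b → 2 * σA ≤ ‖a - b‖)
    (hσ2 : ∃ a ∈ A, ∃ b ∈ A, a ≠ b ∧ ‖a - b‖ = 2 * σA)
    (z : EuclideanSpace ℂ (Fin n))
    (hznA : z ∉ (A : Set (EuclideanSpace ℂ (Fin n)))) :
    ∑ a ∈ A, -(ν a * ‖z - a‖ ^ (-(2 * s)))
      ≤ A.inf' hA (fun a => -(ν a * ‖z - a‖ ^ (-(2 * s))))
    ∧ A.inf' hA (fun a => -(ν a * ‖z - a‖ ^ (-(2 * s))))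
      ≤ ∑ a ∈ A, -(ν a * ‖z - a‖ ^ (-(2 * s))) + γ1 ^ 2 / γ0 * σA ^ (-(2 * s)) :=
  stmt_4_general m n hm hmn s hs γ0 γ1 hγ0 hγ0' hγ1 A hA ν hνpos hνsum σA hσ1 hσ2 z
end

section
/- Let 1 ≤ m < n be integers, s := n/m − 1, let 0 < γ0 ≤ 1 ≤ γ1 and δ0 > 0 be real constants. Let A, A' ⊂ ℂ^n be nonempty finite sets with weight functions ν : A → (0,∞) and ν' : A' → (0,∞), each satisfying: all weights are ≥ γ0 and the total weight is ≤ γ1. Let ρ ≥ 0 and suppose there is a bijection β : A → A' such that |a − β(a)| + |ν(a) − ν'(β(a))| ≤ ρ for every a ∈ A. Then for every δ with 0 < δ ≤ δ0, every z ∈ ℂ^n with z ∉ A_δ, and every z' ∈ ℂ^n with z' ∉ A'_δ, one has ψ(z',A') ≤ ψ(z,A) + (2s·γ1·γ0^{−(2s+1)/(2s)} + γ1·δ0/γ0²)·δ^{−2s−1}·(|z − z'| + ρ). -/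
open Finset Metric Real

/-!
Put `p = 2s` and `c = γ0^{1/p} δ`. Since every weight is at least `γ0`, the point `z` lies at
distance at least `c` from every pole of `A`, and likewise `z'` from every pole of `A'`. On
`[c, ∞)` the map `t ↦ t^{-p}` is `p c^{-p-1}`-Lipschitz and bounded by `c^{-p}`, so matching the
pole `a` with `β a` changes its term by at most `ν a · p c^{-p-1} (|z - z'| + ρ) + ρ c^{-p}`.
Summing, with `∑ ν ≤ γ1` and `#A ≤ γ1 / γ0`, and rewriting the powers of `c` as powers of
`γ0` and `δ` gives the claim.
-/

/-- The paper's `ψ(z, A)`, with exponent `p = 2s`. -/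
noncomputable def weightFunction {E : Type*} [SeminormedAddCommGroup E] (p : ℝ) (ν : E → ℝ)
    (A : Finset E) (z : E) : ℝ :=
  ∑ a ∈ A, -(ν a * ‖z - a‖ ^ (-p))

theorem rpow_neg_sub_rpow_neg_le {p c t₁ t₂ : ℝ} (hp : 0 < p) (hc : 0 < c) (h₁ : c ≤ t₁)
    (h₂ : c ≤ t₂) : t₁ ^ (-p) - t₂ ^ (-p) ≤ p * c ^ (-p - 1) * |t₁ - t₂| := by
  have hderiv : ∀ x ∈ Set.Ici c, HasDerivWithinAt (fun t : ℝ => t ^ (-p))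
      (-p * x ^ (-p - 1)) (Set.Ici c) x := fun x hx =>
    (hasDerivAt_rpow_const (Or.inl (hc.trans_le hx).ne')).hasDerivWithinAt
  have hbound : ∀ x ∈ Set.Ici c, ‖-p * x ^ (-p - 1)‖ ≤ p * c ^ (-p - 1) := by
    intro x hx
    rw [norm_mul, norm_neg, norm_of_nonneg hp.le,
      norm_of_nonneg (rpow_nonneg (hc.le.trans hx) _)]
    exact mul_le_mul_of_nonneg_left (rpow_le_rpow_of_nonpos hc hx (by linarith)) hp.le
  have hmvt := (convex_Ici c).norm_image_sub_le_of_norm_hasDerivWithin_le hderiv hbound h₂ h₁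
  rw [norm_eq_abs, norm_eq_abs] at hmvt
  exact (le_abs_self _).trans hmvt

theorem mul_rpow_neg_sub_mul_rpow_neg_le {p c w w' r r' : ℝ} (hp : 0 < p) (hc : 0 < c)
    (hw : 0 ≤ w) (hr : c ≤ r) (hr' : c ≤ r') :
    w * r ^ (-p) - w' * r' ^ (-p) ≤ w * (p * c ^ (-p - 1) * |r - r'|) + |w - w'| * c ^ (-p) := by
  have hr'p : 0 ≤ r' ^ (-p) := rpow_nonneg (hc.le.trans hr') _
  have hlip := mul_le_mul_of_nonneg_left (rpow_neg_sub_rpow_neg_le hp hc hr hr') hw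
  have hweight : (w - w') * r' ^ (-p) ≤ |w - w'| * c ^ (-p) :=
    calc (w - w') * r' ^ (-p) ≤ |w - w'| * r' ^ (-p) :=
          mul_le_mul_of_nonneg_right (le_abs_self _) hr'p
      _ ≤ |w - w'| * c ^ (-p) :=
          mul_le_mul_of_nonneg_left (rpow_le_rpow_of_nonpos hc hr' (by linarith)) (abs_nonneg _)
  nlinarith

section

variable {E : Type*} [SeminormedAddCommGroup E]

theorem neg_mul_norm_rpow_neg_le {p c ρ w w' : ℝ} {z z' a a' : E} (hp : 0 < p) (hc : 0 < c)
    (hw : 0 ≤ w) (hz : c ≤ ‖z - a‖) (hz' : c ≤ ‖z' - a'‖) (hρ : ‖a - a'‖ + |w - w'| ≤ ρ) :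
    -(w' * ‖z' - a'‖ ^ (-p))
      ≤ -(w * ‖z - a‖ ^ (-p)) + (w * (p * c ^ (-p - 1) * (‖z - z'‖ + ρ)) + ρ * c ^ (-p)) := by
  have hdist : |‖z - a‖ - ‖z' - a'‖| ≤ ‖z - z'‖ + ρ :=
    calc |‖z - a‖ - ‖z' - a'‖| ≤ ‖(z - a) - (z' - a')‖ := abs_norm_sub_norm_le _ _
      _ = ‖(z - z') - (a - a')‖ := by congr 1; abel
      _ ≤ ‖z - z'‖ + ‖a - a'‖ := norm_sub_le _ _
      _ ≤ ‖z - z'‖ + ρ := by linarith [abs_nonneg (w - w')]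
  have hweight : |w - w'| * c ^ (-p) ≤ ρ * c ^ (-p) :=
    mul_le_mul_of_nonneg_right (by linarith [norm_nonneg (a - a')]) (rpow_nonneg hc.le _)
  have hlip : w * (p * c ^ (-p - 1) * |‖z - a‖ - ‖z' - a'‖|)
      ≤ w * (p * c ^ (-p - 1) * (‖z - z'‖ + ρ)) := by
    gcongr
  linarith [mul_rpow_neg_sub_mul_rpow_neg_le (w' := w') hp hc hw hz hz']

theorem rpow_mul_le_norm_sub_of_notMem_biUnion_ball {A : Finset E} {ν : E → ℝ}
    {q γ₀ δ : ℝ} {z a : E} (hq : 0 ≤ q) (hγ₀ : 0 ≤ γ₀) (hδ : 0 ≤ δ) (ha : a ∈ A)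
    (hνa : γ₀ ≤ ν a) (hz : z ∉ ⋃ a ∈ A, ball a (ν a ^ q * δ)) :
    γ₀ ^ q * δ ≤ ‖z - a‖ := by
  have hza : ν a ^ q * δ ≤ dist z a := by
    by_contra! h
    exact hz (Set.mem_biUnion ha (mem_ball.2 h))
  rw [dist_eq_norm] at hza
  exact (mul_le_mul_of_nonneg_right (rpow_le_rpow hγ₀ hνa hq) hδ).trans hza

theorem weightFunction_le_of_bijOn {p c γ₀ γ₁ ρ : ℝ} {A A' : Finset E} {ν ν' : E → ℝ}
    {β : E → E} {z z' : E} (hp : 0 < p) (hc : 0 < c) (hγ₀ : 0 < γ₀)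
    (hνlb : ∀ a ∈ A, γ₀ ≤ ν a) (hνsum : ∑ a ∈ A, ν a ≤ γ₁) (hρ : 0 ≤ ρ)
    (hβ : Set.BijOn β A A') (hβρ : ∀ a ∈ A, ‖a - β a‖ + |ν a - ν' (β a)| ≤ ρ)
    (hz : ∀ a ∈ A, c ≤ ‖z - a‖) (hz' : ∀ a ∈ A', c ≤ ‖z' - a‖) :
    weightFunction p ν' A' z'
      ≤ weightFunction p ν A z
        + (γ₁ * (p * c ^ (-p - 1) * (‖z - z'‖ + ρ)) + γ₁ / γ₀ * (ρ * c ^ (-p))) := by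
  have hreindex : weightFunction p ν' A' z' = ∑ a ∈ A, -(ν' (β a) * ‖z' - β a‖ ^ (-p)) :=
    (Finset.sum_nbij β (fun a ha => hβ.mapsTo ha) hβ.injOn hβ.surjOn fun _ _ => rfl).symm
  have hterms := Finset.sum_le_sum fun a ha =>
    neg_mul_norm_rpow_neg_le hp hc (hγ₀.le.trans (hνlb a ha)) (hz a ha)
      (hz' _ (hβ.mapsTo ha)) (hβρ a ha)
  have hcard : (#A : ℝ) * γ₀ ≤ γ₁ := by
    simpa [nsmul_eq_mul] using (A.card_nsmul_le_sum ν γ₀ hνlb).trans hνsum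
  have hcard' : (#A : ℝ) * (ρ * c ^ (-p)) ≤ γ₁ / γ₀ * (ρ * c ^ (-p)) :=
    mul_le_mul_of_nonneg_right ((le_div_iff₀ hγ₀).2 hcard) (by positivity)
  have hνsum' : (∑ a ∈ A, ν a) * (p * c ^ (-p - 1) * (‖z - z'‖ + ρ))
      ≤ γ₁ * (p * c ^ (-p - 1) * (‖z - z'‖ + ρ)) :=
    mul_le_mul_of_nonneg_right hνsum (by positivity)
  rw [Finset.sum_add_distrib, Finset.sum_add_distrib, Finset.sum_const, nsmul_eq_mul,
    ← Finset.sum_mul] at hterms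
  rw [hreindex, weightFunction]
  linarith

end

theorem rpow_cutoff_error_le {p γ₀ γ₁ δ δ₀ ρ X : ℝ} (hp : 0 < p) (hγ₀ : 0 < γ₀) (hγ₁ : 0 ≤ γ₁)
    (hδ : 0 < δ) (hδδ₀ : δ ≤ δ₀) (hρ : 0 ≤ ρ) (hρX : ρ ≤ X) :
    γ₁ * (p * (γ₀ ^ (1 / p) * δ) ^ (-p - 1) * X) + γ₁ / γ₀ * (ρ * (γ₀ ^ (1 / p) * δ) ^ (-p))
      ≤ (p * γ₁ * γ₀ ^ (-(p + 1) / p) + γ₁ * δ₀ / γ₀ ^ 2) * δ ^ (-p - 1) * X := by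
  have hc : 0 ≤ γ₀ ^ (1 / p) := rpow_nonneg hγ₀.le _
  have hpow₁ : (γ₀ ^ (1 / p) * δ) ^ (-p - 1) = γ₀ ^ (-(p + 1) / p) * δ ^ (-p - 1) := by
    rw [mul_rpow hc hδ.le, ← rpow_mul hγ₀.le]
    congr 2
    field_simp
    ring
  have hpow₂ : (γ₀ ^ (1 / p) * δ) ^ (-p) = γ₀⁻¹ * (δ * δ ^ (-p - 1)) := by
    rw [mul_rpow hc hδ.le, ← rpow_mul hγ₀.le, show 1 / p * -p = -1 by field_simp, rpow_neg_one,
      ← rpow_one_add' hδ.le (by linarith)]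
    ring_nf
  rw [hpow₁, hpow₂]
  calc _ = p * γ₁ * γ₀ ^ (-(p + 1) / p) * δ ^ (-p - 1) * X
        + γ₁ / γ₀ ^ 2 * (ρ * δ) * δ ^ (-p - 1) := by field_simp
    _ ≤ p * γ₁ * γ₀ ^ (-(p + 1) / p) * δ ^ (-p - 1) * X
        + γ₁ / γ₀ ^ 2 * (X * δ₀) * δ ^ (-p - 1) := by
      gcongr
      linarith
    _ = _ := by ring

theorem stmt_8_general (m n : ℕ) (hm : 1 ≤ m) (hmn : m < n)
    (s : ℝ) (hs : s = (n : ℝ) / (m : ℝ) - 1)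
    (γ0 γ1 : ℝ) (hγ0 : 0 < γ0)
    (δ0 : ℝ)
    (A A' : Finset (EuclideanSpace ℂ (Fin n)))
    (ν ν' : EuclideanSpace ℂ (Fin n) → ℝ)
    (hνlb : ∀ a ∈ A, γ0 ≤ ν a) (hνsum : ∑ a ∈ A, ν a ≤ γ1)
    (hν'lb : ∀ a ∈ A', γ0 ≤ ν' a)
    (ρ : ℝ) (hρ : 0 ≤ ρ)
    (β : EuclideanSpace ℂ (Fin n) → EuclideanSpace ℂ (Fin n))
    (hβ : Set.BijOn β (A : Set (EuclideanSpace ℂ (Fin n)))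
      (A' : Set (EuclideanSpace ℂ (Fin n))))
    (hβρ : ∀ a ∈ A, ‖a - β a‖ + |ν a - ν' (β a)| ≤ ρ)
    (δ : ℝ) (hδ : 0 < δ) (hδδ0 : δ ≤ δ0)
    (z : EuclideanSpace ℂ (Fin n))
    (hz : z ∉ ⋃ a ∈ A, Metric.ball a (ν a ^ (1 / (2 * s)) * δ))
    (z' : EuclideanSpace ℂ (Fin n))
    (hz' : z' ∉ ⋃ a ∈ A', Metric.ball a (ν' a ^ (1 / (2 * s)) * δ)) :
    ∑ a ∈ A', -(ν' a * ‖z' - a‖ ^ (-(2 * s)))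
      ≤ ∑ a ∈ A, -(ν a * ‖z - a‖ ^ (-(2 * s)))
        + (2 * s * γ1 * γ0 ^ (-(2 * s + 1) / (2 * s)) + γ1 * δ0 / γ0 ^ 2)
          * δ ^ (-(2 * s) - 1) * (‖z - z'‖ + ρ) := by
  have hs₀ : 0 < s := by
    have hm₀ : (0 : ℝ) < m := by exact_mod_cast hm
    have : (1 : ℝ) < n / m := (one_lt_div hm₀).2 (by exact_mod_cast hmn)
    linarith
  have hp : 0 < 2 * s := by positivity
  have hq : 0 ≤ 1 / (2 * s) := by positivity
  have hγ1 : 0 ≤ γ1 := (A.sum_nonneg fun a ha => hγ0.le.trans (hνlb a ha)).trans hνsum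
  have hρX : ρ ≤ ‖z - z'‖ + ρ := le_add_of_nonneg_left (norm_nonneg _)
  have hψ := weightFunction_le_of_bijOn hp (by positivity) hγ0 hνlb hνsum hρ hβ hβρ
    (fun a ha => rpow_mul_le_norm_sub_of_notMem_biUnion_ball hq hγ0.le hδ.le ha (hνlb a ha) hz)
    (fun a ha => rpow_mul_le_norm_sub_of_notMem_biUnion_ball hq hγ0.le hδ.le ha (hν'lb a ha) hz')
  exact hψ.trans (add_le_add_right (rpow_cutoff_error_le hp hγ0 hγ1 hδ hδδ0 hρ hρX) _)

/-- case 1 ≤ m < n. Lipschitz-type estimate for ψ along a bijection of poles: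
ψ(z',A') ≤ ψ(z,A) + (2s·γ1·γ0^{−(2s+1)/(2s)} + γ1·δ0/γ0²)·δ^{−2s−1}·(|z − z'| + ρ). -/
theorem stmt_8 (m n : ℕ) (hm : 1 ≤ m) (hmn : m < n)
    (s : ℝ) (hs : s = (n : ℝ) / (m : ℝ) - 1)
    (γ0 γ1 : ℝ) (hγ0 : 0 < γ0) (hγ0' : γ0 ≤ 1) (hγ1 : 1 ≤ γ1)
    (δ0 : ℝ) (hδ0 : 0 < δ0)
    (A A' : Finset (EuclideanSpace ℂ (Fin n))) (hA : A.Nonempty) (hA' : A'.Nonempty)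
    (ν ν' : EuclideanSpace ℂ (Fin n) → ℝ)
    (hνpos : ∀ a ∈ A, 0 < ν a) (hνlb : ∀ a ∈ A, γ0 ≤ ν a) (hνsum : ∑ a ∈ A, ν a ≤ γ1)
    (hν'pos : ∀ a ∈ A', 0 < ν' a) (hν'lb : ∀ a ∈ A', γ0 ≤ ν' a)
    (hν'sum : ∑ a ∈ A', ν' a ≤ γ1)
    (ρ : ℝ) (hρ : 0 ≤ ρ)
    (β : EuclideanSpace ℂ (Fin n) → EuclideanSpace ℂ (Fin n))
    (hβ : Set.BijOn β (A : Set (EuclideanSpace ℂ (Fin n)))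
      (A' : Set (EuclideanSpace ℂ (Fin n))))
    (hβρ : ∀ a ∈ A, ‖a - β a‖ + |ν a - ν' (β a)| ≤ ρ)
    (δ : ℝ) (hδ : 0 < δ) (hδδ0 : δ ≤ δ0)
    (z : EuclideanSpace ℂ (Fin n))
    (hz : z ∉ ⋃ a ∈ A, Metric.ball a (ν a ^ (1 / (2 * s)) * δ))
    (z' : EuclideanSpace ℂ (Fin n))
    (hz' : z' ∉ ⋃ a ∈ A', Metric.ball a (ν' a ^ (1 / (2 * s)) * δ)) :
    ∑ a ∈ A', -(ν' a * ‖z' - a‖ ^ (-(2 * s)))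
      ≤ ∑ a ∈ A, -(ν a * ‖z - a‖ ^ (-(2 * s)))
        + (2 * s * γ1 * γ0 ^ (-(2 * s + 1) / (2 * s)) + γ1 * δ0 / γ0 ^ 2)
          * δ ^ (-(2 * s) - 1) * (‖z - z'‖ + ρ) :=
  stmt_8_general m n hm hmn s hs γ0 γ1 hγ0 δ0 A A' ν ν' hνlb hνsum hν'lb ρ hρ β hβ hβρ δ hδ hδδ0 z
    hz z' hz'
end
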